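/- Elaboration eliminates all require-expressions: for every typing derivation D of Γ ⊢_Σ M : A in the dependent type theory with require-expressions, the elaborated term elab(D) contains no occurrence of the require operator. -/
import Mathlib


/-- Terms of the dependent type theory with `require`-expressions:
variables, universes `Set_i`, dependent function types `(x : A) → B`,
lambdas, applications, dependent pair types `(x : A) × B`, pairs,
projections, and presupposition binders `require x : A in M`. -/
inductive Tm : Type
  | var : String → Tm
  | set : ℕ → Tm
  | pi : String → Tm → Tm → Tm
  | lam : String → Tm → Tm
  | app : Tm → Tm → Tm
  | sigma : String → Tm → Tm → Tm
  | pair : Tm → Tm → Tm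
  | fst : Tm → Tm
  | snd : Tm → Tm
  | require : String → Tm → Tm → Tm
  deriving DecidableEq

/-- `Tm.subst M x N` is the substitution `[M/x]N` of `M` for the
free occurrences of the variable `x` in `N`. -/
def Tm.subst (M : Tm) (x : String) : Tm → Tm
  | .var y => if y = x then M else .var y
  | .set i => .set i
  | .pi y A B => .pi y (Tm.subst M x A) (if y = x then B else Tm.subst M x B)
  | .lam y N => .lam y (if y = x then N else Tm.subst M x N)
  | .app F N => .app (Tm.subst M x F) (Tm.subst M x N)
  | .sigma y A B => .sigma y (Tm.subst M x A) (if y = x then B else Tm.subst M x B)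
  | .pair N P => .pair (Tm.subst M x N) (Tm.subst M x P)
  | .fst P => .fst (Tm.subst M x P)
  | .snd P => .snd (Tm.subst M x P)
  | .require y A N => .require y (Tm.subst M x A) (if y = x then N else Tm.subst M x N)

/-- Free variables of a term. -/
def Tm.fv : Tm → Finset String
  | .var y => {y}
  | .set _ => ∅
  | .pi y A B => A.fv ∪ (B.fv \ {y})
  | .lam y N => N.fv \ {y}
  | .app F N => F.fv ∪ N.fv
  | .sigma y A B => A.fv ∪ (B.fv \ {y})
  | .pair N P => N.fv ∪ P.fv
  | .fst P => P.fv
  | .snd P => P.fv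
  | .require y A N => A.fv ∪ (N.fv \ {y})

/-- Contexts (and signatures) are finite lists of typed variables. -/
abbrev Ctx := List (String × Tm)

/-- Typing derivations `Γ ⊢_Σ M : A` for the dependent type theory with
`require`-expressions.  This lives in `Type` so that the elaboration
meta-operation can be defined by structural recursion on derivations. -/
inductive Deriv (Sig : Ctx) : Ctx → Tm → Tm → Type
  /-- Projecting a constant from the signature `Σ`. -/
  | const : ∀ (Γ : Ctx) (x : String) (A : Tm), (x, A) ∈ Sig →
      Deriv Sig Γ (.var x) A
  /-- Projecting a hypothesis from the context `Γ`. -/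
  | hyp : ∀ (Γ : Ctx) (x : String) (A : Tm), (x, A) ∈ Γ →
      Deriv Sig Γ (.var x) A
  /-- Cumulativity: `Set_i : Set_j` when `i < j`. -/
  | cumul : ∀ (Γ : Ctx) (i j : ℕ), i < j →
      Deriv Sig Γ (.set i) (.set j)
  /-- `→F` -/
  | piF : ∀ (Γ : Ctx) (x : String) (A B : Tm) (i : ℕ),
      Deriv Sig Γ A (.set i) → Deriv Sig ((x, A) :: Γ) B (.set i) →
      Deriv Sig Γ (.pi x A B) (.set i)
  /-- `→I` -/
  | piI : ∀ (Γ : Ctx) (x : String) (A M B : Tm),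
      Deriv Sig ((x, A) :: Γ) M B →
      Deriv Sig Γ (.lam x M) (.pi x A B)
  /-- `→E` -/
  | piE : ∀ (Γ : Ctx) (x : String) (A B M N : Tm),
      Deriv Sig Γ M (.pi x A B) → Deriv Sig Γ N A →
      Deriv Sig Γ (.app M N) (Tm.subst N x B)
  /-- `×F` -/
  | sigF : ∀ (Γ : Ctx) (x : String) (A B : Tm) (i : ℕ),
      Deriv Sig Γ A (.set i) → Deriv Sig ((x, A) :: Γ) B (.set i) →
      Deriv Sig Γ (.sigma x A B) (.set i)
  /-- `×I` -/
  | sigI : ∀ (Γ : Ctx) (x : String) (A B M N : Tm),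
      Deriv Sig Γ M A → Deriv Sig Γ N (Tm.subst M x B) →
      Deriv Sig Γ (.pair M N) (.sigma x A B)
  /-- `×E₁` -/
  | sigE1 : ∀ (Γ : Ctx) (x : String) (A B P : Tm),
      Deriv Sig Γ P (.sigma x A B) →
      Deriv Sig Γ (.fst P) A
  /-- `×E₂` -/
  | sigE2 : ∀ (Γ : Ctx) (x : String) (A B P : Tm),
      Deriv Sig Γ P (.sigma x A B) →
      Deriv Sig Γ (.snd P) (Tm.subst (.fst P) x B)
  /-- The `require` rule: from `Γ ⊢_Σ M : A`, `Γ ⊢_Σ [M/x]N : B` and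
  `x ∉ FV(B)`, conclude `Γ ⊢_Σ (require x : A in N) : B`. -/
  | req : ∀ (Γ : Ctx) (x : String) (A B M N : Tm),
      Deriv Sig Γ M A → Deriv Sig Γ (Tm.subst M x N) B → x ∉ B.fv →
      Deriv Sig Γ (.require x A N) B

/-- The elaboration meta-operation `elab(D)`, defined by structural recursion
on derivations: the identity on the conclusions of `const`, `hyp` and
`cumulativity`; homomorphic on `→F`, `→I`, `→E`, `×F`, `×I`, `×E₁`, `×E₂`;
and for a derivation ending in `require` with second premise `E` of
`Γ ⊢_Σ [M/x]N : B`, it yields `elab(E)`. -/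
def Deriv.elaborate {Sig : Ctx} : ∀ {Γ : Ctx} {M A : Tm}, Deriv Sig Γ M A → Tm
  | _, _, _, .const _ x _ _ => .var x
  | _, _, _, .hyp _ x _ _ => .var x
  | _, _, _, .cumul _ i _ _ => .set i
  | _, _, _, .piF _ x _ _ _ D E => .pi x D.elaborate E.elaborate
  | _, _, _, .piI _ x _ _ _ D => .lam x D.elaborate
  | _, _, _, .piE _ _ _ _ _ _ D E => .app D.elaborate E.elaborate
  | _, _, _, .sigF _ x _ _ _ D E => .sigma x D.elaborate E.elaborate
  | _, _, _, .sigI _ _ _ _ _ _ D E => .pair D.elaborate E.elaborate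
  | _, _, _, .sigE1 _ _ _ _ _ D => .fst D.elaborate
  | _, _, _, .sigE2 _ _ _ _ _ D => .snd D.elaborate
  | _, _, _, .req _ _ _ _ _ _ _ E _ => E.elaborate
/-- A term contains no occurrence of the `require` operator if it is built
solely from variables, universes, dependent function and pair types,
lambdas, applications, pairs, and projections. -/
def Tm.noRequire : Tm → Prop
  | .var _ => True
  | .set _ => True
  | .pi _ A B => A.noRequire ∧ B.noRequire
  | .lam _ N => N.noRequire
  | .app F N => F.noRequire ∧ N.noRequire
  | .sigma _ A B => A.noRequire ∧ B.noRequire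
  | .pair N P => N.noRequire ∧ P.noRequire
  | .fst P => P.noRequire
  | .snd P => P.noRequire
  | .require _ _ _ => False

/-- **Elaboration eliminates all `require`-expressions**: for every typing
derivation `D` of `Γ ⊢_Σ M : A`, the elaborated term `elab(D)` contains no
occurrence of the `require` operator. -/
theorem elaborate_noRequire {Sig Γ : Ctx} {M A : Tm}
    (D : Deriv Sig Γ M A) : D.elaborate.noRequire := by
  induction D <;> simp_all [Deriv.elaborate, Tm.noRequire]
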